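/- Let W be a tournament limit and let z be a real number with 1/2 ≤ z ≤ 1 such that t(C₃,W) = (z³ + (1−z)³)/8. Then t(C₄,W) = (z⁴ + (1−z)⁴)/16 if and only if there exists a measurable function f : [0,1] → [0,1/2] such that W(x,y) = 1/2 + f(x) − f(y) for almost every (x,y) ∈ [0,1]² (with respect to Lebesgue measure). -/

import Mathlib

/-!
Write `W = 1/2 + V` with `V` antisymmetric, and let `d x = ∫ V x y dy`, `G x u = ∫ V x y V u y dy`
and `c = ∫ d²`. Expanding the cycle integrals gives `t(C₃) = 1/8 - 3c/2` and
`t(C₄) = 1/16 - c + ‖G‖²`, so the hypothesis pins down `c = z(1-z)/4` and the claim becomes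
`‖G‖² = 2c²`. For the residual `R x y = V x y - (d x - d y)` one has
`‖G‖² = 2c² + ‖G - c - d ⊗ d‖² + 2‖R d‖²`, while the Gram kernel of `R` equals
`(G - c - d ⊗ d) + R d ⊗ 1 + 1 ⊗ R d`. Hence `‖G‖² = 2c²` iff the Gram kernel of `R` vanishes,
iff `R = 0` almost everywhere, i.e. `V x y = d x - d y`. Since `|V| ≤ 1/2`, the essential range
of `d` lies in an interval of length `1/2`, and `f = d` shifted into `[0, 1/2]` does the job.
-/

open MeasureTheory

/-- The density of the directed triangle C₃ in a tournament limit. -/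
noncomputable def cycle3Density (W : ℝ → ℝ → ℝ) : ℝ :=
  ∫ x in Set.Icc (0:ℝ) 1, ∫ y in Set.Icc (0:ℝ) 1, ∫ z in Set.Icc (0:ℝ) 1,
    W x y * W y z * W z x

/-- The density of the directed four-cycle C₄ in a tournament limit. -/
noncomputable def cycle4Density (W : ℝ → ℝ → ℝ) : ℝ :=
  ∫ x in Set.Icc (0:ℝ) 1, ∫ y in Set.Icc (0:ℝ) 1, ∫ z in Set.Icc (0:ℝ) 1,
    ∫ u in Set.Icc (0:ℝ) 1, W x y * W y z * W z u * W u x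

open Function Set

namespace TournamentLimit

def BoundedMeasurable {β : Type*} [MeasurableSpace β] (f : β → ℝ) : Prop :=
  Measurable f ∧ ∃ C, ∀ x, |f x| ≤ C

namespace BoundedMeasurable

variable {β γ δ : Type*} [MeasurableSpace β] [MeasurableSpace γ] [MeasurableSpace δ]
  {f g : β → ℝ}

lemma const (a : ℝ) : BoundedMeasurable fun _ : β => a :=
  ⟨measurable_const, |a|, fun _ => le_rfl⟩

lemma mul (hf : BoundedMeasurable f) (hg : BoundedMeasurable g) :
    BoundedMeasurable fun x => f x * g x := by
  obtain ⟨hfm, C, hC⟩ := hf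
  obtain ⟨hgm, D, hD⟩ := hg
  refine ⟨hfm.mul hgm, C * D, fun x => ?_⟩
  rw [abs_mul]
  exact mul_le_mul (hC x) (hD x) (abs_nonneg _) ((abs_nonneg _).trans (hC x))

lemma add (hf : BoundedMeasurable f) (hg : BoundedMeasurable g) :
    BoundedMeasurable fun x => f x + g x := by
  obtain ⟨hfm, C, hC⟩ := hf
  obtain ⟨hgm, D, hD⟩ := hg
  exact ⟨hfm.add hgm, C + D, fun x => (abs_add_le _ _).trans (add_le_add (hC x) (hD x))⟩

lemma neg (hf : BoundedMeasurable f) : BoundedMeasurable fun x => -f x := by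
  obtain ⟨hfm, C, hC⟩ := hf
  exact ⟨hfm.neg, C, fun x => (abs_neg (f x)).trans_le (hC x)⟩

lemma sub (hf : BoundedMeasurable f) (hg : BoundedMeasurable g) :
    BoundedMeasurable fun x => f x - g x := by
  simpa only [sub_eq_add_neg] using hf.add hg.neg

lemma pow (hf : BoundedMeasurable f) (n : ℕ) : BoundedMeasurable fun x => f x ^ n := by
  induction n with
  | zero => simpa using const (β := β) 1
  | succ n ih => simpa only [pow_succ] using ih.mul hf

lemma comp {h : γ → β} (hf : BoundedMeasurable f) (hh : Measurable h) :
    BoundedMeasurable fun x => f (h x) := by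
  obtain ⟨hfm, C, hC⟩ := hf
  exact ⟨hfm.comp hh, C, fun x => hC (h x)⟩

lemma comp₂ {K : β → γ → ℝ} (hK : BoundedMeasurable fun p : β × γ => K p.1 p.2)
    {a : δ → β} {b : δ → γ} (ha : Measurable a) (hb : Measurable b) :
    BoundedMeasurable fun x => K (a x) (b x) :=
  hK.comp (ha.prodMk hb)

lemma integrable (hf : BoundedMeasurable f) (μ : Measure β) [IsFiniteMeasure μ] :
    Integrable f μ := by
  obtain ⟨hfm, C, hC⟩ := hf
  exact .of_bound hfm.aestronglyMeasurable C (ae_of_all _ hC)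

lemma integral {F : β × γ → ℝ} (hF : BoundedMeasurable F) (ν : Measure γ) [IsFiniteMeasure ν] :
    BoundedMeasurable fun x => ∫ y, F (x, y) ∂ν := by
  obtain ⟨hFm, C, hC⟩ := hF
  refine ⟨hFm.stronglyMeasurable.integral_prod_right'.measurable, C * ν.real univ, fun x => ?_⟩
  simpa only [Real.norm_eq_abs] using norm_integral_le_of_norm_le_const (μ := ν)
    (ae_of_all _ fun y => (Real.norm_eq_abs _).trans_le (hC (x, y)))

end BoundedMeasurable

section Integrals

variable {α β : Type*} [MeasurableSpace α] [MeasurableSpace β] {μ : Measure α} {ν : Measure β}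

lemma ae_eq_zero_of_setIntegral_prod_eq_zero {f : α × β → ℝ} (hf : Integrable f (μ.prod ν))
    (h : ∀ ⦃s⦄, MeasurableSet s → ∀ ⦃t⦄, MeasurableSet t → ∫ z in s ×ˢ t, f z ∂μ.prod ν = 0) :
    f =ᵐ[μ.prod ν] 0 := by
  have hparts : (fun z => ENNReal.ofReal (f z)) =ᵐ[μ.prod ν] fun z => ENNReal.ofReal (-f z) := by
    refine ae_eq_of_setLIntegral_prod_eq hf.1.aemeasurable.ennreal_ofReal
      hf.1.aemeasurable.neg.ennreal_ofReal hf.lintegral_lt_top.ne fun s hs t ht => ?_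
    have hft := hf.restrict (s := s ×ˢ t)
    have := h hs ht
    rw [integral_eq_lintegral_pos_part_sub_lintegral_neg_part hft, sub_eq_zero] at this
    exact (ENNReal.toReal_eq_toReal_iff' hft.lintegral_lt_top.ne
      hft.neg.lintegral_lt_top.ne).1 this
  filter_upwards [hparts] with z hz
  show f z = 0
  rcases le_total (f z) 0 with hle | hle
  · linarith [ENNReal.ofReal_eq_zero.1 (hz.symm.trans (ENNReal.ofReal_eq_zero.2 hle))]
  · linarith [ENNReal.ofReal_eq_zero.1 (hz.trans (ENNReal.ofReal_eq_zero.2 (neg_nonpos.2 hle)))]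

variable [IsFiniteMeasure μ] [IsFiniteMeasure ν]

lemma integral_integral_swap_of_boundedMeasurable {F : α → β → ℝ}
    (hF : BoundedMeasurable fun p : α × β => F p.1 p.2) :
    ∫ x, ∫ y, F x y ∂ν ∂μ = ∫ y, ∫ x, F x y ∂μ ∂ν :=
  integral_integral_swap (hF.integrable _)

lemma integral_integral_eq_zero_of_antisymm {F : α → α → ℝ}
    (hF : BoundedMeasurable fun p : α × α => F p.1 p.2) (hanti : ∀ x y, F y x = -F x y) :
    ∫ x, ∫ y, F x y ∂μ ∂μ = 0 := by
  have hswap := integral_integral_swap_of_boundedMeasurable (μ := μ) (ν := μ) hF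
  have hneg : ∫ y, ∫ x, F x y ∂μ ∂μ = -∫ y, ∫ x, F y x ∂μ ∂μ := by
    rw [← integral_neg]
    congr 1 with y
    rw [← integral_neg]
    simp_rw [hanti y]
  linarith

lemma integral_sq_integral_eq {K : α → β → ℝ} (hK : BoundedMeasurable fun p : α × β => K p.1 p.2) :
    ∫ y, (∫ x, K x y ∂μ) ^ 2 ∂ν = ∫ x, ∫ u, ∫ y, K x y * K u y ∂ν ∂μ ∂μ := by
  have hKK : BoundedMeasurable fun p : (α × β) × α => K p.1.1 p.1.2 * K p.2 p.1.2 :=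
    (hK.comp₂ (by fun_prop) (by fun_prop)).mul (hK.comp₂ (by fun_prop) (by fun_prop))
  calc ∫ y, (∫ x, K x y ∂μ) ^ 2 ∂ν = ∫ y, ∫ x, ∫ u, K x y * K u y ∂μ ∂μ ∂ν := by
        congr 1 with y
        rw [sq, ← integral_mul_const]
        congr 1 with x
        rw [← integral_const_mul]
    _ = ∫ x, ∫ y, ∫ u, K x y * K u y ∂μ ∂ν ∂μ :=
        (integral_integral_swap_of_boundedMeasurable (hKK.integral μ)).symm
    _ = ∫ x, ∫ u, ∫ y, K x y * K u y ∂ν ∂μ ∂μ := by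
        congr 1 with x
        exact integral_integral_swap_of_boundedMeasurable
          ((hK.comp₂ measurable_const measurable_fst).mul (hK.comp₂ measurable_snd measurable_fst))

lemma ae_eq_zero_of_integral_integral_sq_eq_zero {F : α → β → ℝ}
    (hF : BoundedMeasurable fun p : α × β => F p.1 p.2)
    (h : ∫ x, ∫ y, F x y ^ 2 ∂ν ∂μ = 0) : ∀ᵐ p ∂μ.prod ν, F p.1 p.2 = 0 := by
  have hint := (hF.pow 2).integrable (μ.prod ν)
  have hprod := integral_prod _ hint
  rw [h] at hprod
  filter_upwards [(integral_eq_zero_iff_of_nonneg (fun p => sq_nonneg _) hint).1 hprod] with p hp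
  exact pow_eq_zero_iff two_ne_zero |>.1 hp

/-- Testing the Gram kernel on `s × s` (`integral_sq_integral_eq` for `μ.restrict s`) shows that
`∫ x in s, K x y ∂μ` vanishes for a.e. `y`, hence every rectangle integral of `K` vanishes. -/
lemma ae_eq_zero_of_ae_integral_mul_eq_zero {K : α → β → ℝ}
    (hK : BoundedMeasurable fun p : α × β => K p.1 p.2)
    (hgram : ∀ᵐ p ∂μ.prod μ, ∫ y, K p.1 y * K p.2 y ∂ν = 0) :
    ∀ᵐ p ∂μ.prod ν, K p.1 p.2 = 0 := by
  refine ae_eq_zero_of_setIntegral_prod_eq_zero (hK.integrable _) fun s hs t ht => ?_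
  have hsec : ∀ᵐ y ∂ν, ∫ x in s, K x y ∂μ = 0 := by
    have hgram_s : ∀ᵐ p ∂(μ.restrict s).prod (μ.restrict s),
        ∫ y, K p.1 y * K p.2 y ∂ν = 0 := by
      rw [Measure.prod_restrict]
      exact ae_restrict_of_ae hgram
    have hsq : ∫ y, (∫ x in s, K x y ∂μ) ^ 2 ∂ν = 0 := by
      rw [integral_sq_integral_eq hK]
      exact integral_eq_zero_of_ae
        ((Measure.ae_ae_of_ae_prod hgram_s).mono fun x hx => integral_eq_zero_of_ae hx)
    have hint : Integrable (fun y => (∫ x in s, K x y ∂μ) ^ 2) ν :=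
      (((hK.comp₂ measurable_snd measurable_fst).integral (μ.restrict s)).pow 2).integrable ν
    filter_upwards [(integral_eq_zero_iff_of_nonneg (fun y => sq_nonneg _) hint).1 hsq] with y hy
    exact pow_eq_zero_iff two_ne_zero |>.1 hy
  rw [← Measure.prod_restrict,
    integral_prod_symm _ (hK.integrable ((μ.restrict s).prod (ν.restrict t)))]
  exact integral_eq_zero_of_ae (ae_restrict_of_ae hsec)

end Integrals

lemma exists_ae_mem_Icc_of_ae_abs_sub_le {α : Type*} [MeasurableSpace α] {μ : Measure α}
    [SFinite μ] [NeZero μ] {d : α → ℝ} {C : ℝ} (hC : ∀ x, |d x| ≤ C) {r : ℝ}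
    (h : ∀ᵐ p ∂μ.prod μ, |d p.1 - d p.2| ≤ r) : ∃ a, ∀ᵐ x ∂μ, d x ∈ Icc a (a + r) := by
  refine ⟨essInf d μ, ?_⟩
  have hge : ∀ᵐ x ∂μ, essInf d μ ≤ d x :=
    ae_essInf_le (Filter.isBoundedUnder_of ⟨-C, fun x => neg_le_of_abs_le (hC x)⟩)
  have hle : ∀ᵐ x ∂μ, d x ≤ essInf d μ + r := by
    by_contra hbad
    rw [ae_iff] at hbad
    obtain ⟨x₀, hx₀, hsec⟩ := Measure.exists_mem_of_measure_ne_zero_of_ae hbad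
      (ae_restrict_of_ae (Measure.ae_ae_of_ae_prod h))
    have : d x₀ - r ≤ essInf d μ :=
      le_essInf_of_ae_le _ (hsec.mono fun y hy => by linarith [(abs_le.1 hy).2])
        (Filter.isCoboundedUnder_ge_of_le _ fun x => le_of_abs_le (hC x))
    exact hx₀ (by linarith)
  filter_upwards [hge, hle] with x h1 h2 using ⟨h1, h2⟩

section Kernel

variable {α : Type*} [MeasurableSpace α] (μ : Measure α)

noncomputable def rowMean (V : α → α → ℝ) (x : α) : ℝ := ∫ y, V x y ∂μ

noncomputable def kernelApply (V : α → α → ℝ) (f : α → ℝ) (x : α) : ℝ := ∫ y, V x y * f y ∂μ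

noncomputable def gram (V : α → α → ℝ) (x u : α) : ℝ := ∫ y, V x y * V u y ∂μ

noncomputable def rowMeanSq (V : α → α → ℝ) : ℝ := ∫ x, rowMean μ V x ^ 2 ∂μ

noncomputable def gramNormSq (V : α → α → ℝ) : ℝ := ∫ x, ∫ u, gram μ V x u ^ 2 ∂μ ∂μ

noncomputable def residual (V : α → α → ℝ) (x y : α) : ℝ :=
  V x y - (rowMean μ V x - rowMean μ V y)

noncomputable def twoPathDensity (V : α → α → ℝ) (z x : α) : ℝ :=
  ∫ u, (1 / 2 + V z u) * (1 / 2 + V u x) ∂μ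

variable {μ} {V : α → α → ℝ}

lemma gram_comm (x u : α) : gram μ V x u = gram μ V u x := by
  simp only [gram, mul_comm]

lemma integral_left_eq_neg_rowMean (hanti : ∀ x y, V y x = -V x y) (y : α) :
    ∫ x, V x y ∂μ = -rowMean μ V y := by
  simp only [hanti y, integral_neg, rowMean]

variable [IsFiniteMeasure μ]

lemma boundedMeasurable_rowMean (hV : BoundedMeasurable fun p : α × α => V p.1 p.2) :
    BoundedMeasurable (rowMean μ V) :=
  hV.integral μ

lemma boundedMeasurable_kernelApply (hV : BoundedMeasurable fun p : α × α => V p.1 p.2)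
    {f : α → ℝ} (hf : BoundedMeasurable f) : BoundedMeasurable (kernelApply μ V f) :=
  (hV.mul (hf.comp measurable_snd)).integral μ

lemma boundedMeasurable_gram (hV : BoundedMeasurable fun p : α × α => V p.1 p.2) :
    BoundedMeasurable fun p : α × α => gram μ V p.1 p.2 :=
  ((hV.comp₂ (measurable_fst.comp measurable_fst) measurable_snd).mul
    (hV.comp₂ (measurable_snd.comp measurable_fst) measurable_snd)).integral μ

lemma boundedMeasurable_residual (hV : BoundedMeasurable fun p : α × α => V p.1 p.2) :
    BoundedMeasurable fun p : α × α => residual μ V p.1 p.2 :=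
  hV.sub (((boundedMeasurable_rowMean hV).comp measurable_fst).sub
    ((boundedMeasurable_rowMean hV).comp measurable_snd))

lemma boundedMeasurable_twoPathDensity (hV : BoundedMeasurable fun p : α × α => V p.1 p.2) :
    BoundedMeasurable fun p : α × α => twoPathDensity μ V p.1 p.2 :=
  (((BoundedMeasurable.const _).add (hV.comp₂ (measurable_fst.comp measurable_fst)
    measurable_snd)).mul ((BoundedMeasurable.const _).add
      (hV.comp₂ measurable_snd (measurable_snd.comp measurable_fst)))).integral μ

lemma integral_rowMean (hV : BoundedMeasurable fun p : α × α => V p.1 p.2)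
    (hanti : ∀ x y, V y x = -V x y) : ∫ x, rowMean μ V x ∂μ = 0 :=
  integral_integral_eq_zero_of_antisymm hV hanti

lemma integral_kernelApply_rowMean (hV : BoundedMeasurable fun p : α × α => V p.1 p.2)
    (hanti : ∀ x y, V y x = -V x y) :
    ∫ x, kernelApply μ V (rowMean μ V) x ∂μ = -rowMeanSq μ V := by
  unfold kernelApply
  rw [integral_integral_swap_of_boundedMeasurable
    (hV.mul ((boundedMeasurable_rowMean hV).comp measurable_snd))]
  simp only [integral_mul_const, integral_left_eq_neg_rowMean hanti, rowMeanSq, ← integral_neg]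
  congr 1 with y
  ring

lemma integral_gram_right (hV : BoundedMeasurable fun p : α × α => V p.1 p.2)
    (hanti : ∀ x y, V y x = -V x y) (x : α) :
    ∫ u, gram μ V x u ∂μ = -kernelApply μ V (rowMean μ V) x := by
  unfold gram
  rw [integral_integral_swap_of_boundedMeasurable
    ((hV.comp₂ measurable_const measurable_snd).mul (hV.comp₂ measurable_fst measurable_snd))]
  simp only [integral_const_mul, integral_left_eq_neg_rowMean hanti, kernelApply, ← integral_neg]
  congr 1 with y
  ring

lemma integral_integral_gram_mul_rowMean (hV : BoundedMeasurable fun p : α × α => V p.1 p.2)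
    (hanti : ∀ x y, V y x = -V x y) :
    ∫ x, ∫ u, gram μ V x u * (rowMean μ V x * rowMean μ V u) ∂μ ∂μ
      = ∫ x, kernelApply μ V (rowMean μ V) x ^ 2 ∂μ := by
  have hK : BoundedMeasurable fun p : α × α => rowMean μ V p.1 * V p.1 p.2 :=
    ((boundedMeasurable_rowMean hV).comp measurable_fst).mul hV
  convert (integral_sq_integral_eq (μ := μ) (ν := μ)
    (K := fun x y => rowMean μ V x * V x y) hK).symm using 1
  · congr 1 with x
    congr 1 with u
    rw [gram, ← integral_mul_const]
    congr 1 with y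
    ring
  · congr 1 with y
    have : ∫ x, rowMean μ V x * V x y ∂μ = -kernelApply μ V (rowMean μ V) y := by
      rw [kernelApply, ← integral_neg]
      congr 1 with x
      rw [hanti y x]
      ring
    rw [this, neg_sq]

lemma kernelApply_residual_rowMean (hV : BoundedMeasurable fun p : α × α => V p.1 p.2)
    (hanti : ∀ x y, V y x = -V x y) (x : α) :
    kernelApply μ (residual μ V) (rowMean μ V) x
      = kernelApply μ V (rowMean μ V) x + rowMeanSq μ V := by
  have hd := boundedMeasurable_rowMean (μ := μ) hV
  have i1 : Integrable (fun y => V x y * rowMean μ V y) μ :=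
    ((hV.comp₂ measurable_const measurable_id).mul hd).integrable μ
  have i2 : Integrable (fun y => rowMean μ V y) μ := hd.integrable μ
  have i3 : Integrable (fun y => rowMean μ V y ^ 2) μ := (hd.pow 2).integrable μ
  calc kernelApply μ (residual μ V) (rowMean μ V) x
      = ∫ y, (V x y * rowMean μ V y - rowMean μ V x * rowMean μ V y + rowMean μ V y ^ 2) ∂μ := by
        rw [kernelApply]
        congr 1 with y
        rw [residual]
        ring
    _ = _ := by
        rw [integral_add (by fun_prop) (by fun_prop), integral_sub (by fun_prop) (by fun_prop),
          integral_const_mul, integral_rowMean hV hanti, kernelApply, rowMeanSq]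
        ring

end Kernel

section CycleDensities

variable {α : Type*} [MeasurableSpace α] {μ : Measure α} [IsProbabilityMeasure μ]
  {V : α → α → ℝ}

lemma twoPathDensity_eq (hV : BoundedMeasurable fun p : α × α => V p.1 p.2)
    (hanti : ∀ x y, V y x = -V x y) (z x : α) :
    twoPathDensity μ V z x = 1 / 4 + (rowMean μ V z - rowMean μ V x) / 2 - gram μ V z x := by
  have hVz := hV.comp₂ (measurable_const (a := z)) measurable_id
  have hVx := hV.comp₂ (measurable_const (a := x)) measurable_id
  have i1 : Integrable (fun u => V z u) μ := hVz.integrable μ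
  have i2 : Integrable (fun u => V x u) μ := hVx.integrable μ
  have i3 : Integrable (fun u => V z u * V x u) μ := (hVz.mul hVx).integrable μ
  calc twoPathDensity μ V z x
      = ∫ u, (1 / 4 + 1 / 2 * V z u - 1 / 2 * V x u - V z u * V x u) ∂μ := by
        rw [twoPathDensity]
        congr 1 with u
        rw [hanti x u]
        ring
    _ = _ := by
        rw [integral_sub (by fun_prop) (by fun_prop), integral_sub (by fun_prop) (by fun_prop),
          integral_add (by fun_prop) (by fun_prop), integral_const_mul, integral_const_mul,
          integral_const]
        simp only [probReal_univ, smul_eq_mul, one_mul, rowMean, gram]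
        ring

lemma integral_cycle_three_fiber (hV : BoundedMeasurable fun p : α × α => V p.1 p.2)
    (hanti : ∀ x y, V y x = -V x y) (x : α) :
    ∫ y, ∫ z, (1 / 2 + V x y) * (1 / 2 + V y z) * (1 / 2 + V z x) ∂μ ∂μ
      = ∫ y, V x y * (1 / 4 - gram μ V y x) ∂μ + 1 / 8 - 1 / 4 * rowMean μ V x
        + kernelApply μ V (rowMean μ V) x - 1 / 2 * rowMean μ V x ^ 2 := by
  have hd := boundedMeasurable_rowMean (μ := μ) hV
  have hVx := hV.comp₂ (measurable_const (a := x)) measurable_id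
  have i1 : Integrable (fun y => V x y * (1 / 4 - gram μ V y x)) μ :=
    (hVx.mul ((BoundedMeasurable.const _).sub ((boundedMeasurable_gram hV).comp₂ measurable_id
      (measurable_const (a := x))))).integrable μ
  have i2 : Integrable (fun y => rowMean μ V y) μ := hd.integrable μ
  have i3 : Integrable (fun y => gram μ V x y) μ :=
    ((boundedMeasurable_gram hV).comp₂ (measurable_const (a := x)) measurable_id).integrable μ
  have i4 : Integrable (fun y => V x y * rowMean μ V y) μ := (hVx.mul hd).integrable μ
  have i5 : Integrable (fun y => V x y) μ := hVx.integrable μ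
  have hdx : ∫ y, V x y ∂μ = rowMean μ V x := rfl
  calc _ = ∫ y, (1 / 2 + V x y) * twoPathDensity μ V y x ∂μ := by
        simp_rw [mul_assoc, integral_const_mul]
        rfl
    _ = ∫ y, (V x y * (1 / 4 - gram μ V y x) + 1 / 8 + 1 / 4 * rowMean μ V y
          - 1 / 4 * rowMean μ V x - 1 / 2 * gram μ V x y + 1 / 2 * (V x y * rowMean μ V y)
          - 1 / 2 * rowMean μ V x * V x y) ∂μ := by
        congr 1 with y
        rw [twoPathDensity_eq hV hanti, gram_comm y x]
        ring
    _ = _ := by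
        rw [integral_sub (by fun_prop) (by fun_prop), integral_add (by fun_prop) (by fun_prop),
          integral_sub (by fun_prop) (by fun_prop), integral_sub (by fun_prop) (by fun_prop),
          integral_add (by fun_prop) (by fun_prop), integral_add (by fun_prop) (by fun_prop),
          integral_const_mul, integral_const_mul, integral_const_mul, integral_const_mul,
          integral_const_mul, integral_const, integral_const, integral_rowMean hV hanti,
          integral_gram_right hV hanti, hdx]
        simp only [probReal_univ, smul_eq_mul, one_mul, kernelApply]
        ring

lemma integral_cycle_three (hV : BoundedMeasurable fun p : α × α => V p.1 p.2)
    (hanti : ∀ x y, V y x = -V x y) :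
    ∫ x, ∫ y, ∫ z, (1 / 2 + V x y) * (1 / 2 + V y z) * (1 / 2 + V z x) ∂μ ∂μ ∂μ
      = 1 / 8 - 3 / 2 * rowMeanSq μ V := by
  have hd := boundedMeasurable_rowMean (μ := μ) hV
  have hA : BoundedMeasurable fun p : α × α => V p.1 p.2 * (1 / 4 - gram μ V p.2 p.1) :=
    hV.mul ((BoundedMeasurable.const _).sub
      ((boundedMeasurable_gram hV).comp₂ measurable_snd measurable_fst))
  have i1 : Integrable (fun x => ∫ y, V x y * (1 / 4 - gram μ V y x) ∂μ) μ :=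
    (hA.integral μ).integrable μ
  have i2 : Integrable (fun x => rowMean μ V x) μ := hd.integrable μ
  have i3 : Integrable (kernelApply μ V (rowMean μ V)) μ :=
    (boundedMeasurable_kernelApply hV hd).integrable μ
  have i4 : Integrable (fun x => rowMean μ V x ^ 2) μ := (hd.pow 2).integrable μ
  simp_rw [integral_cycle_three_fiber hV hanti]
  rw [integral_sub (by fun_prop) (by fun_prop), integral_add (by fun_prop) (by fun_prop),
    integral_sub (by fun_prop) (by fun_prop), integral_add (by fun_prop) (by fun_prop),
    integral_const_mul, integral_const_mul, integral_const, integral_rowMean hV hanti,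
    integral_kernelApply_rowMean hV hanti,
    integral_integral_eq_zero_of_antisymm hA fun x y => by rw [hanti, gram_comm]; ring]
  simp only [probReal_univ, smul_eq_mul, one_mul, rowMeanSq]
  ring

lemma integral_cycle_four_fiber (hV : BoundedMeasurable fun p : α × α => V p.1 p.2)
    (hanti : ∀ x y, V y x = -V x y) (x : α) :
    ∫ y, ∫ z, ∫ u, (1 / 2 + V x y) * (1 / 2 + V y z) * (1 / 2 + V z u) * (1 / 2 + V u x)
      ∂μ ∂μ ∂μ
      = 1 / 16 + 1 / 2 * kernelApply μ V (rowMean μ V) x + ∫ z, gram μ V x z ^ 2 ∂μ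
        - 1 / 4 * rowMean μ V x ^ 2 - 1 / 4 * rowMeanSq μ V := by
  have hd := boundedMeasurable_rowMean (μ := μ) hV
  have hGx := (boundedMeasurable_gram (μ := μ) hV).comp₂ (measurable_const (a := x)) measurable_id
  have hW : BoundedMeasurable fun p : α × α => 1 / 2 + V p.1 p.2 :=
    (BoundedMeasurable.const _).add hV
  have i1 : Integrable (fun z => gram μ V x z) μ := hGx.integrable μ
  have i2 : Integrable (fun z => gram μ V x z ^ 2) μ := (hGx.pow 2).integrable μ
  have i3 : Integrable (fun z => rowMean μ V z) μ := hd.integrable μ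
  have i4 : Integrable (fun z => rowMean μ V z ^ 2) μ := (hd.pow 2).integrable μ
  calc _ = ∫ y, ∫ z, (1 / 2 + V x y) * (1 / 2 + V y z) * twoPathDensity μ V z x ∂μ ∂μ := by
        simp_rw [mul_assoc, integral_const_mul]
        rfl
    _ = ∫ z, twoPathDensity μ V x z * twoPathDensity μ V z x ∂μ := by
        rw [integral_integral_swap_of_boundedMeasurable
          (((hW.comp₂ (K := fun a b => 1 / 2 + V a b) measurable_const measurable_fst).mul
            (hW.comp₂ (K := fun a b => 1 / 2 + V a b) measurable_fst measurable_snd)).mul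
            ((boundedMeasurable_twoPathDensity hV).comp₂ measurable_snd measurable_const))]
        simp_rw [integral_mul_const]
        rfl
    _ = ∫ z, (1 / 16 - 1 / 2 * gram μ V x z + gram μ V x z ^ 2 - 1 / 4 * rowMean μ V x ^ 2
          + 1 / 2 * rowMean μ V x * rowMean μ V z - 1 / 4 * rowMean μ V z ^ 2) ∂μ := by
        congr 1 with z
        rw [twoPathDensity_eq hV hanti, twoPathDensity_eq hV hanti, gram_comm z x]
        ring
    _ = _ := by
        rw [integral_sub (by fun_prop) (by fun_prop), integral_add (by fun_prop) (by fun_prop),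
          integral_sub (by fun_prop) (by fun_prop), integral_add (by fun_prop) (by fun_prop),
          integral_sub (by fun_prop) (by fun_prop), integral_const_mul, integral_const_mul,
          integral_const_mul, integral_const_mul, integral_const, integral_const,
          integral_rowMean hV hanti, integral_gram_right hV hanti, rowMeanSq]
        simp only [probReal_univ, smul_eq_mul, one_mul]
        ring

lemma integral_cycle_four (hV : BoundedMeasurable fun p : α × α => V p.1 p.2)
    (hanti : ∀ x y, V y x = -V x y) :
    ∫ x, ∫ y, ∫ z, ∫ u, (1 / 2 + V x y) * (1 / 2 + V y z) * (1 / 2 + V z u) * (1 / 2 + V u x)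
      ∂μ ∂μ ∂μ ∂μ = 1 / 16 - rowMeanSq μ V + gramNormSq μ V := by
  have hd := boundedMeasurable_rowMean (μ := μ) hV
  have i1 : Integrable (kernelApply μ V (rowMean μ V)) μ :=
    (boundedMeasurable_kernelApply hV hd).integrable μ
  have i2 : Integrable (fun x => ∫ z, gram μ V x z ^ 2 ∂μ) μ :=
    (((boundedMeasurable_gram hV).pow 2).integral μ).integrable μ
  have i3 : Integrable (fun x => rowMean μ V x ^ 2) μ := (hd.pow 2).integrable μ
  simp_rw [integral_cycle_four_fiber hV hanti]
  rw [integral_sub (by fun_prop) (by fun_prop), integral_sub (by fun_prop) (by fun_prop),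
    integral_add (by fun_prop) (by fun_prop), integral_add (by fun_prop) (by fun_prop),
    integral_const_mul, integral_const_mul, integral_const, integral_const,
    integral_kernelApply_rowMean hV hanti, gramNormSq, rowMeanSq]
  simp only [probReal_univ, smul_eq_mul, one_mul]
  ring

end CycleDensities

section GramNorm

variable {α : Type*} [MeasurableSpace α] {μ : Measure α} [IsProbabilityMeasure μ]
  {V : α → α → ℝ}

lemma integral_sq_gram_sub (hV : BoundedMeasurable fun p : α × α => V p.1 p.2)
    (hanti : ∀ x y, V y x = -V x y) (x : α) :
    ∫ u, (gram μ V x u - rowMeanSq μ V - rowMean μ V x * rowMean μ V u) ^ 2 ∂μ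
      = ∫ u, gram μ V x u ^ 2 ∂μ + 2 * rowMeanSq μ V * kernelApply μ V (rowMean μ V) x
        - 2 * ∫ u, gram μ V x u * (rowMean μ V x * rowMean μ V u) ∂μ
        + rowMeanSq μ V ^ 2 + rowMeanSq μ V * rowMean μ V x ^ 2 := by
  have hd := boundedMeasurable_rowMean (μ := μ) hV
  have hGx := (boundedMeasurable_gram (μ := μ) hV).comp₂ (measurable_const (a := x)) measurable_id
  have i1 : Integrable (fun u => gram μ V x u ^ 2) μ := (hGx.pow 2).integrable μ
  have i2 : Integrable (fun u => gram μ V x u) μ := hGx.integrable μ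
  have i3 : Integrable (fun u => gram μ V x u * (rowMean μ V x * rowMean μ V u)) μ :=
    (hGx.mul ((BoundedMeasurable.const _).mul hd)).integrable μ
  have i4 : Integrable (fun u => rowMean μ V u) μ := hd.integrable μ
  have i5 : Integrable (fun u => rowMean μ V u ^ 2) μ := (hd.pow 2).integrable μ
  calc _ = ∫ u, (gram μ V x u ^ 2 - 2 * rowMeanSq μ V * gram μ V x u
        - 2 * (gram μ V x u * (rowMean μ V x * rowMean μ V u)) + rowMeanSq μ V ^ 2
        + 2 * rowMeanSq μ V * rowMean μ V x * rowMean μ V u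
        + rowMean μ V x ^ 2 * rowMean μ V u ^ 2) ∂μ := by
        congr 1 with u
        ring
    _ = _ := by
        rw [integral_add (by fun_prop) (by fun_prop), integral_add (by fun_prop) (by fun_prop),
          integral_add (by fun_prop) (by fun_prop), integral_sub (by fun_prop) (by fun_prop),
          integral_sub (by fun_prop) (by fun_prop), integral_const_mul, integral_const_mul,
          integral_const_mul, integral_const_mul, integral_const, integral_gram_right hV hanti,
          integral_rowMean hV hanti, ← rowMeanSq]
        simp only [probReal_univ, smul_eq_mul, one_mul]
        ring

lemma integral_integral_sq_gram_sub (hV : BoundedMeasurable fun p : α × α => V p.1 p.2)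
    (hanti : ∀ x y, V y x = -V x y) :
    ∫ x, ∫ u, (gram μ V x u - rowMeanSq μ V - rowMean μ V x * rowMean μ V u) ^ 2 ∂μ ∂μ
      = gramNormSq μ V - 2 * ∫ x, kernelApply μ V (rowMean μ V) x ^ 2 ∂μ := by
  have hd := boundedMeasurable_rowMean (μ := μ) hV
  have hG := boundedMeasurable_gram (μ := μ) hV
  have i1 : Integrable (fun x => ∫ u, gram μ V x u ^ 2 ∂μ) μ :=
    ((hG.pow 2).integral μ).integrable μ
  have i2 : Integrable (kernelApply μ V (rowMean μ V)) μ :=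
    (boundedMeasurable_kernelApply hV hd).integrable μ
  have i3 : Integrable (fun x => ∫ u, gram μ V x u * (rowMean μ V x * rowMean μ V u) ∂μ) μ :=
    ((hG.mul ((hd.comp measurable_fst).mul (hd.comp measurable_snd))).integral μ).integrable μ
  have i4 : Integrable (fun x => rowMean μ V x ^ 2) μ := (hd.pow 2).integrable μ
  simp_rw [integral_sq_gram_sub hV hanti]
  rw [integral_add (by fun_prop) (by fun_prop), integral_add (by fun_prop) (by fun_prop),
    integral_sub (by fun_prop) (by fun_prop), integral_add (by fun_prop) (by fun_prop),
    integral_const_mul, integral_const_mul, integral_const_mul, integral_const,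
    integral_kernelApply_rowMean hV hanti, integral_integral_gram_mul_rowMean hV hanti,
    ← rowMeanSq, gramNormSq]
  simp only [probReal_univ, smul_eq_mul, one_mul]
  ring

lemma gram_residual (hV : BoundedMeasurable fun p : α × α => V p.1 p.2)
    (hanti : ∀ x y, V y x = -V x y) (x u : α) :
    gram μ (residual μ V) x u
      = (gram μ V x u - rowMeanSq μ V - rowMean μ V x * rowMean μ V u)
        + kernelApply μ (residual μ V) (rowMean μ V) x
        + kernelApply μ (residual μ V) (rowMean μ V) u := by
  have hd := boundedMeasurable_rowMean (μ := μ) hV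
  have hVx := hV.comp₂ (measurable_const (a := x)) measurable_id
  have hVu := hV.comp₂ (measurable_const (a := u)) measurable_id
  have i1 : Integrable (fun y => V x y * V u y) μ := (hVx.mul hVu).integrable μ
  have i2 : Integrable (fun y => V x y * rowMean μ V y) μ := (hVx.mul hd).integrable μ
  have i3 : Integrable (fun y => V u y * rowMean μ V y) μ := (hVu.mul hd).integrable μ
  have i4 : Integrable (fun y => rowMean μ V y ^ 2) μ := (hd.pow 2).integrable μ
  have i5 : Integrable (fun y => V x y) μ := hVx.integrable μ
  have i6 : Integrable (fun y => V u y) μ := hVu.integrable μ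
  have i7 : Integrable (fun y => rowMean μ V y) μ := hd.integrable μ
  rw [kernelApply_residual_rowMean hV hanti, kernelApply_residual_rowMean hV hanti]
  calc gram μ (residual μ V) x u
      = ∫ y, (V x y * V u y + V x y * rowMean μ V y + V u y * rowMean μ V y + rowMean μ V y ^ 2
          - rowMean μ V u * V x y - rowMean μ V x * V u y
          - (rowMean μ V x + rowMean μ V u) * rowMean μ V y
          + rowMean μ V x * rowMean μ V u) ∂μ := by
        rw [gram]
        congr 1 with y
        rw [residual, residual]
        ring
    _ = _ := by
        rw [integral_add (by fun_prop) (by fun_prop), integral_sub (by fun_prop) (by fun_prop),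
          integral_sub (by fun_prop) (by fun_prop), integral_sub (by fun_prop) (by fun_prop),
          integral_add (by fun_prop) (by fun_prop), integral_add (by fun_prop) (by fun_prop),
          integral_add (by fun_prop) (by fun_prop), integral_const_mul, integral_const_mul,
          integral_const_mul, integral_const, integral_rowMean hV hanti, ← gram, ← rowMean,
          ← rowMean, ← kernelApply, ← kernelApply, ← rowMeanSq]
        simp only [probReal_univ, smul_eq_mul, one_mul]
        ring

lemma gramNormSq_eq (hV : BoundedMeasurable fun p : α × α => V p.1 p.2)
    (hanti : ∀ x y, V y x = -V x y) :
    gramNormSq μ V = 2 * rowMeanSq μ V ^ 2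
      + ∫ x, ∫ u, (gram μ V x u - rowMeanSq μ V - rowMean μ V x * rowMean μ V u) ^ 2 ∂μ ∂μ
      + 2 * ∫ x, kernelApply μ (residual μ V) (rowMean μ V) x ^ 2 ∂μ := by
  have hq := boundedMeasurable_kernelApply (μ := μ) hV (boundedMeasurable_rowMean (μ := μ) hV)
  have i1 : Integrable (fun x => kernelApply μ V (rowMean μ V) x ^ 2) μ := (hq.pow 2).integrable μ
  have i2 : Integrable (kernelApply μ V (rowMean μ V)) μ := hq.integrable μ
  have hsq : ∀ x, kernelApply μ (residual μ V) (rowMean μ V) x ^ 2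
      = kernelApply μ V (rowMean μ V) x ^ 2
        + 2 * rowMeanSq μ V * kernelApply μ V (rowMean μ V) x + rowMeanSq μ V ^ 2 := by
    intro x
    rw [kernelApply_residual_rowMean hV hanti]
    ring
  simp_rw [hsq]
  rw [integral_integral_sq_gram_sub hV hanti, integral_add (by fun_prop) (by fun_prop),
    integral_add (by fun_prop) (by fun_prop), integral_const_mul,
    integral_kernelApply_rowMean hV hanti, integral_const]
  simp only [probReal_univ, smul_eq_mul, one_mul]
  ring

lemma ae_residual_eq_zero_of_gramNormSq_eq (hV : BoundedMeasurable fun p : α × α => V p.1 p.2)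
    (hanti : ∀ x y, V y x = -V x y) (h : gramNormSq μ V = 2 * rowMeanSq μ V ^ 2) :
    ∀ᵐ p ∂μ.prod μ, residual μ V p.1 p.2 = 0 := by
  have hd := boundedMeasurable_rowMean (μ := μ) hV
  have hRd := boundedMeasurable_kernelApply (μ := μ) (boundedMeasurable_residual (μ := μ) hV) hd
  have hE : BoundedMeasurable fun p : α × α =>
      gram μ V p.1 p.2 - rowMeanSq μ V - rowMean μ V p.1 * rowMean μ V p.2 :=
    ((boundedMeasurable_gram hV).sub (.const _)).sub
      ((hd.comp measurable_fst).mul (hd.comp measurable_snd))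
  have hA : 0 ≤ ∫ x, ∫ u, (gram μ V x u - rowMeanSq μ V - rowMean μ V x * rowMean μ V u) ^ 2
      ∂μ ∂μ :=
    integral_nonneg fun x => integral_nonneg fun u => sq_nonneg _
  have hB : 0 ≤ ∫ x, kernelApply μ (residual μ V) (rowMean μ V) x ^ 2 ∂μ :=
    integral_nonneg fun x => sq_nonneg _
  rw [gramNormSq_eq hV hanti] at h
  have hEae := ae_eq_zero_of_integral_integral_sq_eq_zero hE (by linarith)
  have hRdae : ∀ᵐ x ∂μ, kernelApply μ (residual μ V) (rowMean μ V) x = 0 := by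
    filter_upwards [(integral_eq_zero_iff_of_nonneg (fun x => sq_nonneg _)
      ((hRd.pow 2).integrable μ)).1 (by linarith)] with x hx
    exact pow_eq_zero_iff two_ne_zero |>.1 hx
  refine ae_eq_zero_of_ae_integral_mul_eq_zero (boundedMeasurable_residual hV) ?_
  filter_upwards [hEae, Measure.quasiMeasurePreserving_fst.ae hRdae,
    Measure.quasiMeasurePreserving_snd.ae hRdae] with p h1 h2 h3
  rw [← gram, gram_residual hV hanti, h1, h2, h3, add_zero, add_zero]

lemma gramNormSq_eq_of_ae_residual_eq_zero (hV : BoundedMeasurable fun p : α × α => V p.1 p.2)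
    (hanti : ∀ x y, V y x = -V x y) (h : ∀ᵐ p ∂μ.prod μ, residual μ V p.1 p.2 = 0) :
    gramNormSq μ V = 2 * rowMeanSq μ V ^ 2 := by
  have hsec : ∀ᵐ x ∂μ, ∀ᵐ y ∂μ, residual μ V x y = 0 := Measure.ae_ae_of_ae_prod h
  have hRd : ∀ᵐ x ∂μ, kernelApply μ (residual μ V) (rowMean μ V) x = 0 :=
    hsec.mono fun x hx => integral_eq_zero_of_ae (hx.mono fun y hy => by simp [hy])
  have hgram : ∀ᵐ x ∂μ, ∀ u, gram μ (residual μ V) x u = 0 :=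
    hsec.mono fun x hx u => integral_eq_zero_of_ae (hx.mono fun y hy => by simp [hy])
  have hA : ∫ x, ∫ u, (gram μ V x u - rowMeanSq μ V - rowMean μ V x * rowMean μ V u) ^ 2
      ∂μ ∂μ = 0 := by
    refine integral_eq_zero_of_ae ?_
    filter_upwards [hRd, hgram] with x h1 h2
    refine integral_eq_zero_of_ae ?_
    filter_upwards [hRd] with u h3
    have := gram_residual (μ := μ) hV hanti x u
    rw [h1, h3, h2 u, add_zero, add_zero] at this
    rw [← this]
    simp
  have hB : ∫ x, kernelApply μ (residual μ V) (rowMean μ V) x ^ 2 ∂μ = 0 :=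
    integral_eq_zero_of_ae (hRd.mono fun x hx => by simp [hx])
  rw [gramNormSq_eq hV hanti, hA, hB]
  ring

lemma gramNormSq_eq_two_mul_sq_iff (hV : BoundedMeasurable fun p : α × α => V p.1 p.2)
    (hanti : ∀ x y, V y x = -V x y) :
    gramNormSq μ V = 2 * rowMeanSq μ V ^ 2 ↔ ∀ᵐ p ∂μ.prod μ, residual μ V p.1 p.2 = 0 :=
  ⟨ae_residual_eq_zero_of_gramNormSq_eq hV hanti, gramNormSq_eq_of_ae_residual_eq_zero hV hanti⟩

lemma ae_residual_eq_zero_of_ae_eq_sub {g : α → ℝ} (hg : BoundedMeasurable g)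
    (h : ∀ᵐ p ∂μ.prod μ, V p.1 p.2 = g p.1 - g p.2) :
    ∀ᵐ p ∂μ.prod μ, residual μ V p.1 p.2 = 0 := by
  have hrow : ∀ᵐ x ∂μ, rowMean μ V x = g x - ∫ y, g y ∂μ := by
    filter_upwards [Measure.ae_ae_of_ae_prod h] with x hx
    rw [rowMean, integral_congr_ae hx, integral_sub (integrable_const _) (hg.integrable μ),
      integral_const, probReal_univ, one_smul]
  filter_upwards [h, Measure.quasiMeasurePreserving_fst.ae hrow,
    Measure.quasiMeasurePreserving_snd.ae hrow] with p h1 h2 h3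
  rw [residual, h1, h2, h3]
  ring

end GramNorm

section UnitInterval

instance : IsProbabilityMeasure (volume.restrict (Icc (0:ℝ) 1)) := ⟨by simp [Real.volume_Icc]⟩

local notation "μ₁" => (volume.restrict (Icc (0:ℝ) 1) : Measure ℝ)

/-- Extending `W - 1/2` by `0` off the unit square makes antisymmetry and the bound `1/2` hold
everywhere. -/
noncomputable def centeredKernel (W : ℝ → ℝ → ℝ) (x y : ℝ) : ℝ :=
  (Icc (0:ℝ) 1 ×ˢ Icc (0:ℝ) 1).indicator (fun p => W p.1 p.2 - 1 / 2) (x, y)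

variable {W : ℝ → ℝ → ℝ}

lemma half_add_centeredKernel {x y : ℝ} (hx : x ∈ Icc (0:ℝ) 1) (hy : y ∈ Icc (0:ℝ) 1) :
    1 / 2 + centeredKernel W x y = W x y := by
  rw [centeredKernel, indicator_of_mem (mk_mem_prod hx hy)]
  ring

lemma abs_centeredKernel_le (hrange : ∀ x ∈ Icc (0:ℝ) 1, ∀ y ∈ Icc (0:ℝ) 1, W x y ∈ Icc (0:ℝ) 1)
    (x y : ℝ) : |centeredKernel W x y| ≤ 1 / 2 := by
  by_cases hxy : (x, y) ∈ Icc (0:ℝ) 1 ×ˢ Icc (0:ℝ) 1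
  · have := hrange _ hxy.1 _ hxy.2
    simp only [centeredKernel, indicator_of_mem hxy, abs_le]
    constructor <;> linarith [this.1, this.2]
  · rw [centeredKernel, indicator_of_notMem hxy, abs_zero]
    norm_num

lemma boundedMeasurable_centeredKernel (hmeas : Measurable (uncurry W))
    (hrange : ∀ x ∈ Icc (0:ℝ) 1, ∀ y ∈ Icc (0:ℝ) 1, W x y ∈ Icc (0:ℝ) 1) :
    BoundedMeasurable fun p : ℝ × ℝ => centeredKernel W p.1 p.2 :=
  ⟨(hmeas.sub measurable_const).indicator (measurableSet_Icc.prod measurableSet_Icc),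
    1 / 2, fun p => abs_centeredKernel_le hrange p.1 p.2⟩

lemma centeredKernel_antisymm (hsym : ∀ x ∈ Icc (0:ℝ) 1, ∀ y ∈ Icc (0:ℝ) 1, W x y + W y x = 1)
    (x y : ℝ) : centeredKernel W y x = -centeredKernel W x y := by
  by_cases hxy : (x, y) ∈ Icc (0:ℝ) 1 ×ˢ Icc (0:ℝ) 1
  · have hyx : (y, x) ∈ Icc (0:ℝ) 1 ×ˢ Icc (0:ℝ) 1 := ⟨hxy.2, hxy.1⟩
    simp only [centeredKernel, indicator_of_mem hxy, indicator_of_mem hyx]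
    linarith [hsym _ hxy.1 _ hxy.2]
  · have hyx : (y, x) ∉ Icc (0:ℝ) 1 ×ˢ Icc (0:ℝ) 1 := fun h => hxy ⟨h.2, h.1⟩
    rw [centeredKernel, centeredKernel, indicator_of_notMem hxy, indicator_of_notMem hyx, neg_zero]

lemma cycle3Density_eq (hmeas : Measurable (uncurry W))
    (hrange : ∀ x ∈ Icc (0:ℝ) 1, ∀ y ∈ Icc (0:ℝ) 1, W x y ∈ Icc (0:ℝ) 1)
    (hsym : ∀ x ∈ Icc (0:ℝ) 1, ∀ y ∈ Icc (0:ℝ) 1, W x y + W y x = 1) :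
    cycle3Density W = 1 / 8 - 3 / 2 * rowMeanSq μ₁ (centeredKernel W) := by
  rw [← integral_cycle_three (boundedMeasurable_centeredKernel hmeas hrange)
    (centeredKernel_antisymm hsym)]
  exact setIntegral_congr_fun measurableSet_Icc fun x hx =>
    setIntegral_congr_fun measurableSet_Icc fun y hy =>
    setIntegral_congr_fun measurableSet_Icc fun t ht => by
      simp only [half_add_centeredKernel hx hy, half_add_centeredKernel hy ht,
        half_add_centeredKernel ht hx]

lemma cycle4Density_eq (hmeas : Measurable (uncurry W))
    (hrange : ∀ x ∈ Icc (0:ℝ) 1, ∀ y ∈ Icc (0:ℝ) 1, W x y ∈ Icc (0:ℝ) 1)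
    (hsym : ∀ x ∈ Icc (0:ℝ) 1, ∀ y ∈ Icc (0:ℝ) 1, W x y + W y x = 1) :
    cycle4Density W
      = 1 / 16 - rowMeanSq μ₁ (centeredKernel W) + gramNormSq μ₁ (centeredKernel W) := by
  rw [← integral_cycle_four (boundedMeasurable_centeredKernel hmeas hrange)
    (centeredKernel_antisymm hsym)]
  exact setIntegral_congr_fun measurableSet_Icc fun x hx =>
    setIntegral_congr_fun measurableSet_Icc fun y hy =>
    setIntegral_congr_fun measurableSet_Icc fun t ht =>
    setIntegral_congr_fun measurableSet_Icc fun u hu => by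
      simp only [half_add_centeredKernel hx hy, half_add_centeredKernel hy ht,
        half_add_centeredKernel ht hu, half_add_centeredKernel hu hx]

lemma ae_half_add_centeredKernel :
    ∀ᵐ p ∂(μ₁).prod μ₁, 1 / 2 + centeredKernel W p.1 p.2 = W p.1 p.2 := by
  have hI : ∀ᵐ x ∂μ₁, x ∈ Icc (0:ℝ) 1 := ae_restrict_mem measurableSet_Icc
  filter_upwards [Measure.quasiMeasurePreserving_fst.ae hI,
    Measure.quasiMeasurePreserving_snd.ae hI] with p h1 h2 using half_add_centeredKernel h1 h2

lemma exists_potential_of_ae_residual_eq_zero (hmeas : Measurable (uncurry W))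
    (hrange : ∀ x ∈ Icc (0:ℝ) 1, ∀ y ∈ Icc (0:ℝ) 1, W x y ∈ Icc (0:ℝ) 1)
    (hR : ∀ᵐ p ∂(μ₁).prod μ₁, residual μ₁ (centeredKernel W) p.1 p.2 = 0) :
    ∃ f : ℝ → ℝ, Measurable f ∧ (∀ x, f x ∈ Icc (0:ℝ) (1 / 2)) ∧
      ∀ᵐ p ∂(μ₁).prod μ₁, W p.1 p.2 = 1 / 2 + f p.1 - f p.2 := by
  obtain ⟨hdm, C, hC⟩ :=
    boundedMeasurable_rowMean (μ := μ₁) (boundedMeasurable_centeredKernel hmeas hrange)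
  have hdiff : ∀ᵐ p ∂(μ₁).prod μ₁, centeredKernel W p.1 p.2
      = rowMean μ₁ (centeredKernel W) p.1 - rowMean μ₁ (centeredKernel W) p.2 :=
    hR.mono fun p hp => sub_eq_zero.1 hp
  obtain ⟨a, ha⟩ := exists_ae_mem_Icc_of_ae_abs_sub_le hC
    (hdiff.mono fun p hp => hp ▸ abs_centeredKernel_le hrange p.1 p.2)
  have hclamp : ∀ x, rowMean μ₁ (centeredKernel W) x ∈ Icc a (a + 1 / 2) →
      max 0 (min (rowMean μ₁ (centeredKernel W) x - a) (1 / 2))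
        = rowMean μ₁ (centeredKernel W) x - a := fun x hx => by
    rw [min_eq_left (by linarith [hx.2]), max_eq_right (by linarith [hx.1])]
  refine ⟨fun x => max 0 (min (rowMean μ₁ (centeredKernel W) x - a) (1 / 2)), by fun_prop,
    fun x => ⟨le_max_left _ _, max_le (by norm_num) (min_le_right _ _)⟩, ?_⟩
  filter_upwards [hdiff, ae_half_add_centeredKernel (W := W),
    Measure.quasiMeasurePreserving_fst.ae ha, Measure.quasiMeasurePreserving_snd.ae ha]
    with p h1 h2 h3 h4
  rw [← h2, h1, hclamp _ h3, hclamp _ h4]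
  ring

lemma ae_residual_eq_zero_of_potential {f : ℝ → ℝ} (hf : Measurable f)
    (hfI : ∀ x ∈ Icc (0:ℝ) 1, f x ∈ Icc (0:ℝ) (1 / 2))
    (hW : ∀ᵐ p ∂(μ₁).prod μ₁, W p.1 p.2 = 1 / 2 + f p.1 - f p.2) :
    ∀ᵐ p ∂(μ₁).prod μ₁, residual μ₁ (centeredKernel W) p.1 p.2 = 0 := by
  have hclamp : ∀ x ∈ Icc (0:ℝ) 1, max 0 (min (f x) (1 / 2)) = f x := fun x hx => by
    rw [min_eq_left (hfI x hx).2, max_eq_right (hfI x hx).1]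
  refine ae_residual_eq_zero_of_ae_eq_sub (g := fun x => max 0 (min (f x) (1 / 2)))
    ⟨by fun_prop, 1 / 2, fun x => abs_le.2 ⟨by linarith [le_max_left 0 (min (f x) (1 / 2))],
      max_le (by norm_num) (min_le_right _ _)⟩⟩ ?_
  have hI : ∀ᵐ x ∂μ₁, x ∈ Icc (0:ℝ) 1 := ae_restrict_mem measurableSet_Icc
  filter_upwards [hW, ae_half_add_centeredKernel (W := W),
    Measure.quasiMeasurePreserving_fst.ae hI, Measure.quasiMeasurePreserving_snd.ae hI]
    with p h1 h2 h3 h4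
  rw [hclamp _ h3, hclamp _ h4]
  linarith

end UnitInterval

end TournamentLimit

open TournamentLimit

theorem stmt_15_general (W : ℝ → ℝ → ℝ)
    (hmeas : Measurable (Function.uncurry W))
    (hrange : ∀ x ∈ Set.Icc (0:ℝ) 1, ∀ y ∈ Set.Icc (0:ℝ) 1, W x y ∈ Set.Icc (0:ℝ) 1)
    (hsym : ∀ x ∈ Set.Icc (0:ℝ) 1, ∀ y ∈ Set.Icc (0:ℝ) 1, W x y + W y x = 1)
    (z : ℝ)
    (h3 : cycle3Density W = (z ^ 3 + (1 - z) ^ 3) / 8) :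
    cycle4Density W = (z ^ 4 + (1 - z) ^ 4) / 16 ↔
      ∃ f : ℝ → ℝ, Measurable f ∧
        (∀ x ∈ Set.Icc (0:ℝ) 1, f x ∈ Set.Icc (0:ℝ) (1/2)) ∧
        (∀ᵐ p : ℝ × ℝ
            ∂(volume.restrict ((Set.Icc (0:ℝ) 1) ×ˢ (Set.Icc (0:ℝ) 1))),
          W p.1 p.2 = 1/2 + f p.1 - f p.2) := by
  set μ := volume.restrict (Icc (0:ℝ) 1)
  set V := centeredKernel W
  have hc : rowMeanSq μ V = z * (1 - z) / 4 := by
    linear_combination (-2 / 3) * (cycle3Density_eq hmeas hrange hsym).symm.trans h3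
  have htarget : (z ^ 4 + (1 - z) ^ 4) / 16 = 1 / 16 - rowMeanSq μ V + 2 * rowMeanSq μ V ^ 2 := by
    rw [hc]
    ring
  rw [cycle4Density_eq hmeas hrange hsym, htarget, add_right_inj,
    gramNormSq_eq_two_mul_sq_iff (boundedMeasurable_centeredKernel hmeas hrange)
      (centeredKernel_antisymm hsym),
    Measure.volume_eq_prod, ← Measure.prod_restrict]
  constructor
  · intro hR
    obtain ⟨f, hf, hfI, hW⟩ := exists_potential_of_ae_residual_eq_zero hmeas hrange hR
    exact ⟨f, hf, fun x _ => hfI x, hW⟩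
  · rintro ⟨f, hf, hfI, hW⟩
    exact ae_residual_eq_zero_of_potential hf hfI hW

/-- Characterization of the extremal tournament limits in the two-part regime. -/
theorem stmt_15 (W : ℝ → ℝ → ℝ)
    (hmeas : Measurable (Function.uncurry W))
    (hrange : ∀ x ∈ Set.Icc (0:ℝ) 1, ∀ y ∈ Set.Icc (0:ℝ) 1, W x y ∈ Set.Icc (0:ℝ) 1)
    (hsym : ∀ x ∈ Set.Icc (0:ℝ) 1, ∀ y ∈ Set.Icc (0:ℝ) 1, W x y + W y x = 1)
    (z : ℝ) (hz : 1/2 ≤ z) (hz1 : z ≤ 1)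
    (h3 : cycle3Density W = (z ^ 3 + (1 - z) ^ 3) / 8) :
    cycle4Density W = (z ^ 4 + (1 - z) ^ 4) / 16 ↔
      ∃ f : ℝ → ℝ, Measurable f ∧
        (∀ x ∈ Set.Icc (0:ℝ) 1, f x ∈ Set.Icc (0:ℝ) (1/2)) ∧
        (∀ᵐ p : ℝ × ℝ
            ∂(volume.restrict ((Set.Icc (0:ℝ) 1) ×ˢ (Set.Icc (0:ℝ) 1))),
          W p.1 p.2 = 1/2 + f p.1 - f p.2) :=
  stmt_15_general W hmeas hrange hsym z h3
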